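/- arXiv:2212.08940 — 3 statements merged into one kernel-verified Lean document; each statement's English description precedes it below -/
import Mathlib

section
/- Let {Λ_i ∈ End*_A(H, V_i)}_{i∈I} be such that Σ_i ⟨Λ_i x, Λ_i x⟩ converges in norm for every x ∈ H. Then {Λ_i} is a g-frame for H with respect to {V_i} if and only if there exist constants A, B > 0 such that A‖x‖² ≤ ‖Σ_i ⟨Λ_i x, Λ_i x⟩‖ ≤ B‖x‖² for all x ∈ H. -/
/-!
Write `S x = ∑ᵢ ⟪Λᵢ x, Λᵢ x⟫`. Order bounds give norm bounds because the norm is monotone on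
positive elements. Conversely, adjointable maps are `A`-linear, so `S (x • a) = a⋆ (S x) a`, just
as `⟪x • a, x • a⟫ = a⋆ ⟪x, x⟫ a`. Applying the norm bounds to every `x • a` thus yields, for
`p, b` the two sides of the desired order bound, `‖a⋆ p a‖ ≤ D ‖a⋆ b a‖` for all `a ∈ A`.
Conjugating by `(b + ε)^(-1/2)` turns `b` into an element of norm at most `1`, whence
`p ≤ D (b + ε)`, and `ε → 0` gives `p ≤ D b`.
-/

open scoped InnerProductSpace RightActions

/-- The Hilbert C⋆-module class as it stood in Mathlib of December 2024 (right `A`-action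
through `Aᵐᵒᵖ`); Mathlib's `CStarModule` now uses a left action. -/
class CStarModuleOld (A E : Type*) [NonUnitalSemiring A] [StarRing A]
    [Module ℂ A] [AddCommGroup E] [Module ℂ E] [PartialOrder A] [SMul Aᵐᵒᵖ E] [Norm A] [Norm E]
    extends Inner A E where
  inner_add_right {x} {y} {z} : inner x (y + z) = inner x y + inner x z
  inner_self_nonneg {x} : 0 ≤ inner x x
  inner_self {x} : inner x x = 0 ↔ x = 0
  inner_op_smul_right {a : A} {x y : E} : inner x (y <• a) = inner x y * a
  inner_smul_right_complex {z : ℂ} {x} {y} : inner x (z • y) = z • inner x y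
  star_inner x y : star (inner x y) = inner y x
  norm_eq_sqrt_norm_inner_self x : ‖x‖ = √‖inner x x‖

open CFC Ring in
lemma le_smul_add_algebraMap_of_norm_conjugate_le {A : Type*} [CStarAlgebra A] [PartialOrder A]
    [StarOrderedRing A] {p b : A} (hp : IsSelfAdjoint p) (hb : 0 ≤ b) {D : ℝ} (hD : 0 ≤ D)
    (h : ∀ a : A, ‖star a * p * a‖ ≤ D * ‖star a * b * a‖) {ε : ℝ} (hε : 0 < ε) :
    p ≤ D • (b + algebraMap ℝ A ε) := by
  set c := b + algebraMap ℝ A ε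
  have hc : IsStrictlyPositive c := (isStrictlyPositive_algebraMap hε).nonneg_add hb
  have hs : IsSelfAdjoint (sqrt c⁻¹ʳ) := by cfc_tac
  have hb_nonneg : 0 ≤ conjSqrt c⁻¹ʳ b := conjugate_nonneg_of_nonneg hb (by cfc_tac)
  have hb_norm : ‖conjSqrt c⁻¹ʳ b‖ ≤ 1 := by
    rw [CStarAlgebra.norm_le_one_iff_of_nonneg _ hb_nonneg, ← conjSqrt_ringInverse_self c]
    exact conjSqrt_le_conjSqrt (le_add_of_nonneg_right (algebraMap_nonneg A hε.le))
  have hp_norm : ‖conjSqrt c⁻¹ʳ p‖ ≤ D := by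
    have := h (sqrt c⁻¹ʳ)
    rw [hs.star_eq, ← conjSqrt_apply, ← conjSqrt_apply] at this
    nlinarith [norm_nonneg (conjSqrt c⁻¹ʳ b)]
  have hp_le : conjSqrt c⁻¹ʳ p ≤ algebraMap ℝ A D := by
    have hsa : IsSelfAdjoint (conjSqrt c⁻¹ʳ p) := by
      simpa [conjSqrt_apply, hs.star_eq] using hp.conjugate (sqrt c⁻¹ʳ)
    exact hsa.le_algebraMap_norm_self.trans (algebraMap_mono A hp_norm)
  calc p = conjSqrt c (conjSqrt c⁻¹ʳ p) := (conjSqrt_conjSqrt_ringInverse c p).symm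
    _ ≤ conjSqrt c (algebraMap ℝ A D) := conjSqrt_le_conjSqrt hp_le
    _ = D • c := by rw [Algebra.algebraMap_eq_smul_one, map_smul, conjSqrt_one c]

open Filter Topology in
lemma le_smul_of_norm_conjugate_le {A : Type*} [CStarAlgebra A] [PartialOrder A]
    [StarOrderedRing A] {p b : A} (hp : IsSelfAdjoint p) (hb : 0 ≤ b) {D : ℝ} (hD : 0 ≤ D)
    (h : ∀ a : A, ‖star a * p * a‖ ≤ D * ‖star a * b * a‖) :
    p ≤ D • b := by
  have hlim : Tendsto (fun ε => D • (b + algebraMap ℝ A ε)) (𝓝[>] 0) (𝓝 (D • b)) :=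
    ((continuous_const.add (continuous_algebraMap ℝ A)).const_smul D).tendsto' 0 _ (by simp)
      |>.mono_left nhdsWithin_le_nhds
  exact ge_of_tendsto hlim (eventually_nhdsWithin_of_forall fun ε hε =>
    le_smul_add_algebraMap_of_norm_conjugate_le hp hb hD h hε)

namespace CStarModuleOld

section Algebraic

variable {A : Type*} [NonUnitalRing A] [StarRing A] [Module ℂ A] [PartialOrder A] [Norm A]
  {E F : Type*} [AddCommGroup E] [Module ℂ E] [SMul Aᵐᵒᵖ E] [Norm E] [CStarModuleOld A E]
  [AddCommGroup F] [Module ℂ F] [SMul Aᵐᵒᵖ F] [Norm F] [CStarModuleOld A F]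

lemma inner_sub_right {x y z : E} : ⟪x, y - z⟫_A = ⟪x, y⟫_A - ⟪x, z⟫_A :=
  (AddMonoidHom.mk' (fun y : E => ⟪x, y⟫_A) fun _ _ => inner_add_right).map_sub y z

lemma inner_sub_left {x y z : E} : ⟪x - y, z⟫_A = ⟪x, z⟫_A - ⟪y, z⟫_A := by
  rw [← star_inner z, inner_sub_right, star_sub, star_inner, star_inner]

lemma inner_op_smul_left {a : A} {x y : E} : ⟪x <• a, y⟫_A = star a * ⟪x, y⟫_A := by
  rw [← star_inner y, inner_op_smul_right, star_mul, star_inner]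

lemma inner_op_smul_op_smul {a : A} {x y : E} :
    ⟪x <• a, y <• a⟫_A = star a * ⟪x, y⟫_A * a := by
  rw [inner_op_smul_left, inner_op_smul_right, mul_assoc]

lemma map_op_smul_of_adjoint {T : E → F} {T' : F → E} (hT : ∀ x v, ⟪T x, v⟫_A = ⟪x, T' v⟫_A)
    (x : E) (a : A) : T (x <• a) = T x <• a := by
  have hv : ∀ v, ⟪T (x <• a), v⟫_A = ⟪T x <• a, v⟫_A := fun v => by
    rw [hT, inner_op_smul_left, inner_op_smul_left, hT]
  rw [← sub_eq_zero, ← inner_self (A := A), inner_sub_left, hv, sub_self]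

end Algebraic

section Normed

variable {A : Type*} [CStarAlgebra A] [PartialOrder A]
  {E : Type*} [AddCommGroup E] [Module ℂ E] [SMul Aᵐᵒᵖ E] [Norm E] [CStarModuleOld A E]

lemma norm_sq_eq_norm_inner_self (x : E) : ‖x‖ ^ 2 = ‖⟪x, x⟫_A‖ := by
  rw [norm_eq_sqrt_norm_inner_self (A := A) x, Real.sq_sqrt (norm_nonneg _)]

variable [StarOrderedRing A]

lemma le_norm_of_smul_inner_self_le {s : A} {C : ℝ} (hC : 0 ≤ C) {x : E}
    (h : C • ⟪x, x⟫_A ≤ s) : C * ‖x‖ ^ 2 ≤ ‖s‖ := by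
  rw [norm_sq_eq_norm_inner_self (A := A), ← Real.norm_of_nonneg hC, ← norm_smul]
  exact CStarAlgebra.norm_le_norm_of_nonneg_of_le (smul_nonneg hC inner_self_nonneg) h

lemma norm_le_of_le_smul_inner_self {s : A} (hs : 0 ≤ s) {D : ℝ} (hD : 0 ≤ D) {x : E}
    (h : s ≤ D • ⟪x, x⟫_A) : ‖s‖ ≤ D * ‖x‖ ^ 2 := by
  rw [norm_sq_eq_norm_inner_self (A := A), ← Real.norm_of_nonneg hD, ← norm_smul]
  exact CStarAlgebra.norm_le_norm_of_nonneg_of_le hs h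

lemma le_smul_inner_self_of_norm_le {S : E → A} (hS : ∀ x a, S (x <• a) = star a * S x * a)
    (hS_sa : ∀ x, IsSelfAdjoint (S x)) {D : ℝ} (hD : 0 ≤ D) (h : ∀ x, ‖S x‖ ≤ D * ‖x‖ ^ 2)
    (x : E) : S x ≤ D • ⟪x, x⟫_A :=
  le_smul_of_norm_conjugate_le (hS_sa x) inner_self_nonneg hD fun a => by
    rw [← hS, ← inner_op_smul_op_smul, ← norm_sq_eq_norm_inner_self]
    exact h _

lemma smul_inner_self_le_of_le_norm {S : E → A} (hS : ∀ x a, S (x <• a) = star a * S x * a)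
    (hS_nonneg : ∀ x, 0 ≤ S x) {C : ℝ} (hC : 0 < C) (h : ∀ x, C * ‖x‖ ^ 2 ≤ ‖S x‖)
    (x : E) : C • ⟪x, x⟫_A ≤ S x := by
  have : ⟪x, x⟫_A ≤ C⁻¹ • S x :=
    le_smul_of_norm_conjugate_le (.of_nonneg inner_self_nonneg) (hS_nonneg x) (inv_nonneg.2 hC.le)
      fun a => by
        rw [← hS, ← inner_op_smul_op_smul, ← norm_sq_eq_norm_inner_self, ← div_eq_inv_mul,
          le_div_iff₀' hC]
        exact h _
  exact (le_inv_smul_iff_of_pos hC).1 this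

end Normed

end CStarModuleOld

/-- Let `Λ i ∈ End*_A(H, V i)` with `∑ᵢ ⟪Λᵢx, Λᵢx⟫` norm convergent for
every `x`. Then `{Λ i}` is a g-frame for `H` w.r.t. `{V i}` iff there are constants
`C, D > 0` with `C‖x‖² ≤ ‖∑ᵢ ⟪Λᵢx, Λᵢx⟫‖ ≤ D‖x‖²` for all `x`. -/
theorem gFrame_iff_norm_bounds
    {A : Type*} [CStarAlgebra A] [PartialOrder A] [StarOrderedRing A]
    {H : Type*} [NormedAddCommGroup H] [NormedSpace ℂ H] [SMul Aᵐᵒᵖ H] [CStarModuleOld A H]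
    {ι : Type*} {V : ι → Type*} [∀ i, NormedAddCommGroup (V i)] [∀ i, NormedSpace ℂ (V i)]
    [∀ i, SMul Aᵐᵒᵖ (V i)] [∀ i, CStarModuleOld A (V i)]
    (Λ : ∀ i, H →L[ℂ] V i) (Λad : ∀ i, V i →L[ℂ] H)
    (hadj : ∀ (i) (x : H) (v : V i), ⟪Λ i x, v⟫_A = ⟪x, Λad i v⟫_A)
    (hsum : ∀ x : H, Summable fun i => ⟪Λ i x, Λ i x⟫_A) :
    (∃ C D : ℝ, 0 < C ∧ 0 < D ∧ ∀ x : H,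
        C • ⟪x, x⟫_A ≤ ∑' i, ⟪Λ i x, Λ i x⟫_A ∧
        (∑' i, ⟪Λ i x, Λ i x⟫_A) ≤ D • ⟪x, x⟫_A) ↔
    (∃ C D : ℝ, 0 < C ∧ 0 < D ∧ ∀ x : H,
        C * ‖x‖ ^ 2 ≤ ‖∑' i, ⟪Λ i x, Λ i x⟫_A‖ ∧
        ‖∑' i, ⟪Λ i x, Λ i x⟫_A‖ ≤ D * ‖x‖ ^ 2) := by
  set S : H → A := fun x => ∑' i, ⟪Λ i x, Λ i x⟫_A
  have hS_nonneg : ∀ x, 0 ≤ S x := fun x => tsum_nonneg fun i => CStarModuleOld.inner_self_nonneg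
  have hS_conj : ∀ x a, S (x <• a) = star a * S x * a := fun x a => by
    simp only [S, CStarModuleOld.map_op_smul_of_adjoint (hadj _),
      CStarModuleOld.inner_op_smul_op_smul]
    rw [((hsum x).mul_left _).tsum_mul_right, (hsum x).tsum_mul_left]
  constructor
  · rintro ⟨C, D, hC, hD, h⟩
    exact ⟨C, D, hC, hD, fun x =>
      ⟨CStarModuleOld.le_norm_of_smul_inner_self_le hC.le (h x).1,
        CStarModuleOld.norm_le_of_le_smul_inner_self (hS_nonneg x) hD.le (h x).2⟩⟩
  · rintro ⟨C, D, hC, hD, h⟩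
    exact ⟨C, D, hC, hD, fun x =>
      ⟨CStarModuleOld.smul_inner_self_le_of_le_norm hS_conj hS_nonneg hC (fun x => (h x).1) x,
        CStarModuleOld.le_smul_inner_self_of_norm_le hS_conj (fun x => .of_nonneg (hS_nonneg x))
          hD.le (fun x => (h x).2) x⟩⟩
end

section
/- Let {Λ_i}_{i∈I} be a K-g-frame for a Hilbert A-module H with bounds A₁, B₁, and let T ∈ End*_A(H) be a co-isometry (TT* = Id) with TK = KT. Then {Λ_iT*}_{i∈I} is a K-g-frame for H with bounds A₁ and B₁‖T*‖². -/
open scoped InnerProductSpace RightActions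

/-!
A co-isometry `T` has `T⋆` as an isometry of the `A`-valued inner product,
`⟪T⋆x, T⋆x⟫ = ⟪T T⋆x, x⟫ = ⟪x, x⟫`, and `T K = K T` passes to the adjoints as `K⋆ T⋆ = T⋆ K⋆`.
Evaluating the frame inequalities of `{Λ i}` at `T⋆x` therefore gives those of `{Λ i T⋆}` at `x`;
the upper bound may be written `B₁ ‖T⋆‖²` because `‖T⋆‖ = 1` unless `H = 0`.
-/

namespace CStarModule

variable {A : Type*} [NonUnitalCStarAlgebra A] [PartialOrder A]
  {E : Type*} [NormedAddCommGroup E] [Module ℂ E] [SMul A E] [CStarModule A E]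
  {F : Type*} [NormedAddCommGroup F] [Module ℂ F] [SMul A F] [CStarModule A F]

lemma ext_inner_left {x y : E} (h : ∀ v : E, ⟪v, x⟫_A = ⟪v, y⟫_A) : x = y := by
  rw [← sub_eq_zero, ← inner_self (A := A), inner_sub_right, h, sub_self]

lemma inner_apply_eq_of_comp_eq_id {T : F → E} {Tad : E → F}
    (hTadj : ∀ x y, ⟪T x, y⟫_A = ⟪x, Tad y⟫_A) (hcoiso : ∀ x, T (Tad x) = x) (x y : E) :
    ⟪Tad x, Tad y⟫_A = ⟪x, y⟫_A := by
  rw [← hTadj, hcoiso]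

lemma norm_apply_eq_of_inner_self_apply_eq [StarOrderedRing A] {f : E → F}
    (hf : ∀ x, ⟪f x, f x⟫_A = ⟪x, x⟫_A) (x : E) : ‖f x‖ = ‖x‖ := by
  rw [norm_eq_sqrt_norm_inner_self (A := A), norm_eq_sqrt_norm_inner_self (A := A) (x := x), hf]

lemma adjoint_comm_of_comm {T K : F → F} {Tad Kad : F → F}
    (hTadj : ∀ x y, ⟪T x, y⟫_A = ⟪x, Tad y⟫_A) (hKadj : ∀ x y, ⟪K x, y⟫_A = ⟪x, Kad y⟫_A)
    (hcomm : ∀ x, T (K x) = K (T x)) (x : F) : Kad (Tad x) = Tad (Kad x) :=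
  ext_inner_left fun v => by rw [← hKadj, ← hTadj, ← hTadj, ← hKadj, hcomm]

end CStarModule

open CStarModule in
theorem kgFrame_comp_coisometry_general
    {A : Type*} [CStarAlgebra A] [PartialOrder A] [StarOrderedRing A]
    {H : Type*} [NormedAddCommGroup H] [NormedSpace ℂ H] [SMul A H] [CStarModule A H]
    {ι : Type*} {V : ι → Type*} [∀ i, NormedAddCommGroup (V i)] [∀ i, NormedSpace ℂ (V i)]
    [∀ i, SMul A (V i)] [∀ i, CStarModule A (V i)]
    (Λ : ∀ i, H →L[ℂ] V i)
    (hsum : ∀ x : H, Summable fun i => ⟪Λ i x, Λ i x⟫_A)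
    (K : H →L[ℂ] H) (Kad : H →L[ℂ] H)
    (hKadj : ∀ x y : H, ⟪K x, y⟫_A = ⟪x, Kad y⟫_A)
    (T : H →L[ℂ] H) (Tad : H →L[ℂ] H)
    (hTadj : ∀ x y : H, ⟪T x, y⟫_A = ⟪x, Tad y⟫_A)
    (hcoiso : ∀ x : H, T (Tad x) = x)
    (hcomm : ∀ x : H, T (K x) = K (T x))
    (A₁ B₁ : ℝ)
    (hframe : ∀ x : H,
      A₁ • ⟪Kad x, Kad x⟫_A ≤ ∑' i, ⟪Λ i x, Λ i x⟫_A ∧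
      (∑' i, ⟪Λ i x, Λ i x⟫_A) ≤ B₁ • ⟪x, x⟫_A) :
    (∀ x : H, Summable fun i => ⟪Λ i (Tad x), Λ i (Tad x)⟫_A) ∧
    ∀ x : H,
      A₁ • ⟪Kad x, Kad x⟫_A ≤ ∑' i, ⟪Λ i (Tad x), Λ i (Tad x)⟫_A ∧
      (∑' i, ⟪Λ i (Tad x), Λ i (Tad x)⟫_A) ≤ (B₁ * ‖Tad‖ ^ 2) • ⟪x, x⟫_A := by
  have hTad_inner : ∀ x, ⟪Tad x, Tad x⟫_A = ⟪x, x⟫_A :=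
    fun x => inner_apply_eq_of_comp_eq_id hTadj hcoiso x x
  refine ⟨fun x => hsum (Tad x), fun x => ⟨?_, ?_⟩⟩
  · simpa only [adjoint_comm_of_comm hTadj hKadj hcomm, hTad_inner] using (hframe (Tad x)).1
  · refine (hframe (Tad x)).2.trans_eq ?_
    rcases eq_or_ne x 0 with rfl | hx
    · simp
    have : Nontrivial H := ⟨⟨x, 0, hx⟩⟩
    let Tad_isometry : H →ₗᵢ[ℂ] H :=
      ⟨Tad.toLinearMap, norm_apply_eq_of_inner_self_apply_eq hTad_inner⟩
    rw [hTad_inner, show ‖Tad‖ = 1 from Tad_isometry.norm_toContinuousLinearMap, one_pow, mul_one]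

/-- Let `{Λ i}` be a `K`-g-frame for `H` with bounds `A₁, B₁`, and let
`T ∈ End*_A(H)` be a co-isometry (`T T⋆ = Id`) with `T K = K T`.  Then `{Λᵢ T⋆}` is a
`K`-g-frame for `H` with bounds `A₁` and `B₁ ‖T⋆‖²`. -/
theorem kgFrame_comp_coisometry
    {A : Type*} [CStarAlgebra A] [PartialOrder A] [StarOrderedRing A]
    {H : Type*} [NormedAddCommGroup H] [NormedSpace ℂ H] [SMul A H] [CStarModule A H]
    {ι : Type*} {V : ι → Type*} [∀ i, NormedAddCommGroup (V i)] [∀ i, NormedSpace ℂ (V i)]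
    [∀ i, SMul A (V i)] [∀ i, CStarModule A (V i)]
    (Λ : ∀ i, H →L[ℂ] V i) (Λad : ∀ i, V i →L[ℂ] H)
    (hΛadj : ∀ (i) (x : H) (v : V i), ⟪Λ i x, v⟫_A = ⟪x, Λad i v⟫_A)
    (hsum : ∀ x : H, Summable fun i => ⟪Λ i x, Λ i x⟫_A)
    (K : H →L[ℂ] H) (Kad : H →L[ℂ] H)
    (hKadj : ∀ x y : H, ⟪K x, y⟫_A = ⟪x, Kad y⟫_A)
    (T : H →L[ℂ] H) (Tad : H →L[ℂ] H)
    (hTadj : ∀ x y : H, ⟪T x, y⟫_A = ⟪x, Tad y⟫_A)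
    (hcoiso : ∀ x : H, T (Tad x) = x)
    (hcomm : ∀ x : H, T (K x) = K (T x))
    (A₁ B₁ : ℝ) (hA₁ : 0 < A₁) (hB₁ : 0 < B₁)
    (hframe : ∀ x : H,
      A₁ • ⟪Kad x, Kad x⟫_A ≤ ∑' i, ⟪Λ i x, Λ i x⟫_A ∧
      (∑' i, ⟪Λ i x, Λ i x⟫_A) ≤ B₁ • ⟪x, x⟫_A) :
    (∀ x : H, Summable fun i => ⟪Λ i (Tad x), Λ i (Tad x)⟫_A) ∧
    ∀ x : H,
      A₁ • ⟪Kad x, Kad x⟫_A ≤ ∑' i, ⟪Λ i (Tad x), Λ i (Tad x)⟫_A ∧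
      (∑' i, ⟪Λ i (Tad x), Λ i (Tad x)⟫_A) ≤ (B₁ * ‖Tad‖ ^ 2) • ⟪x, x⟫_A :=
  kgFrame_comp_coisometry_general (A := A) Λ hsum K Kad hKadj T Tad hTadj hcoiso hcomm A₁ B₁ hframe
end

section
/- Let {T_i}_{i∈I} be an operator frame for End*_A(H) with bounds ν and δ, and let {R_i}_{i∈I} ⊂ End*_A(H) be an operator Bessel family with bound ξ < ν. Then {T_i + R_i}_{i∈I} is an operator frame for H with bounds (√ν − √ξ)² and (√δ + √ξ)². -/
/-!
Write `‖v‖₂ = √‖∑ ⟪v i, v i⟫‖` for the norm of a family in `ℓ²(ι, H)`. The frame and Bessel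
inequalities give `√ν ‖x‖ ≤ ‖(T i x)‖₂ ≤ √δ ‖x‖` and `‖(R i x)‖₂ ≤ √ξ ‖x‖`, so both bounds are the
triangle inequality for `‖·‖₂`, applied to `T x + R x` and to `(T x + R x) - R x`.
Minkowski's inequality itself comes from `0 ≤ ⟪β a - α b, β a - α b⟫`, i.e.
`α β ⟪a + b, a + b⟫ ≤ (α + β) (β ⟪a, a⟫ + α ⟪b, b⟫)`, summed over `i` and then optimised at
`α ≈ ‖u‖₂`, `β ≈ ‖v‖₂`.
-/

open scoped InnerProductSpace RightActions

open Filter Topology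

lemma CStarAlgebra.summable_of_nonneg_of_le {A : Type*} [CStarAlgebra A] [PartialOrder A]
    [StarOrderedRing A] {ι : Type*} {f g : ι → A} (hf : ∀ i, 0 ≤ f i) (hfg : ∀ i, f i ≤ g i)
    (hg : Summable g) : Summable f := by
  rw [summable_iff_vanishing_norm] at hg ⊢
  intro ε hε
  obtain ⟨s, hs⟩ := hg ε hε
  refine ⟨s, fun t ht => ?_⟩
  exact (CStarAlgebra.norm_le_norm_of_nonneg_of_le (Finset.sum_nonneg fun i _ => hf i)
    (Finset.sum_le_sum fun i _ => hfg i)).trans_lt (hs t ht)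

lemma Real.le_sqrt_add_sqrt_sq_of_forall {S a b : ℝ} (ha : 0 ≤ a) (hb : 0 ≤ b)
    (h : ∀ α β : ℝ, 0 < α → 0 < β → α * β * S ≤ (α + β) * (β * a + α * b)) :
    S ≤ (√a + √b) ^ 2 := by
  have hsa := Real.sqrt_nonneg a
  have hsb := Real.sqrt_nonneg b
  -- `α = √a + ε`, `β = √b + ε` make the bound `(√a + √b + 2ε) (√a + √b)`
  have key : ∀ ε > 0, S ≤ (√a + √b + 2 * ε) * (√a + √b) := by
    intro ε hε
    have hα : 0 < √a + ε := by positivity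
    have hβ : 0 < √b + ε := by positivity
    have hαa : a ≤ (√a + ε) * √a := by nlinarith [Real.mul_self_sqrt ha]
    have hβb : b ≤ (√b + ε) * √b := by nlinarith [Real.mul_self_sqrt hb]
    refine le_of_mul_le_mul_left ?_ (mul_pos hα hβ)
    calc (√a + ε) * (√b + ε) * S
        ≤ (√a + ε + (√b + ε)) * ((√b + ε) * a + (√a + ε) * b) := h _ _ hα hβ
      _ ≤ (√a + ε + (√b + ε)) * ((√b + ε) * ((√a + ε) * √a) + (√a + ε) * ((√b + ε) * √b)) := by
          gcongr
      _ = (√a + ε) * (√b + ε) * ((√a + √b + 2 * ε) * (√a + √b)) := by ring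
  have hlim : Tendsto (fun ε : ℝ => (√a + √b + 2 * ε) * (√a + √b)) (𝓝[>] 0)
      (𝓝 ((√a + √b) ^ 2)) := by
    have : Continuous fun ε : ℝ => (√a + √b + 2 * ε) * (√a + √b) := by fun_prop
    simpa [sq] using (this.tendsto 0).mono_left nhdsWithin_le_nhds
  exact ge_of_tendsto hlim (eventually_nhdsWithin_of_forall key)

namespace CStarModule

variable {A : Type*} [CStarAlgebra A] [PartialOrder A]
  {H : Type*} [NormedAddCommGroup H] [NormedSpace ℂ H] [SMul A H] [CStarModule A H]

lemma norm_smul_inner_self {c : ℝ} (hc : 0 ≤ c) (x : H) : ‖c • ⟪x, x⟫_A‖ = c * ‖x‖ ^ 2 := by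
  rw [norm_smul, Real.norm_of_nonneg hc, norm_sq_eq (A := A)]

variable [StarOrderedRing A]

lemma mul_smul_inner_self_add_le (α β : ℝ) (a b : H) :
    (α * β) • ⟪a + b, a + b⟫_A ≤ (α + β) • (β • ⟪a, a⟫_A + α • ⟪b, b⟫_A) := by
  have h : (0 : A) ≤ ⟪β • a - α • b, β • a - α • b⟫_A := inner_self_nonneg
  simp only [inner_sub_left, inner_sub_right, inner_add_left, inner_add_right,
    inner_smul_left_real, inner_smul_right_real, smul_sub, smul_smul] at h ⊢
  rw [← sub_nonneg]
  convert h using 1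
  module

variable {ι : Type*} {u v : ι → H}

lemma summable_inner_self_add (hu : Summable fun i => ⟪u i, u i⟫_A)
    (hv : Summable fun i => ⟪v i, v i⟫_A) :
    Summable fun i => ⟪u i + v i, u i + v i⟫_A :=
  CStarAlgebra.summable_of_nonneg_of_le (fun _ => inner_self_nonneg)
    (fun i => by simpa only [mul_one, one_smul] using mul_smul_inner_self_add_le 1 1 (u i) (v i))
    ((hu.add hv).const_smul (1 + 1 : ℝ))

lemma mul_norm_tsum_inner_self_add_le (hu : Summable fun i => ⟪u i, u i⟫_A)
    (hv : Summable fun i => ⟪v i, v i⟫_A) {α β : ℝ} (hα : 0 ≤ α) (hβ : 0 ≤ β) :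
    α * β * ‖∑' i, ⟪u i + v i, u i + v i⟫_A‖ ≤
      (α + β) * (β * ‖∑' i, ⟪u i, u i⟫_A‖ + α * ‖∑' i, ⟪v i, v i⟫_A‖) := by
  have hle : (α * β) • ∑' i, ⟪u i + v i, u i + v i⟫_A ≤
      (α + β) • (β • ∑' i, ⟪u i, u i⟫_A + α • ∑' i, ⟪v i, v i⟫_A) := by
    rw [← (summable_inner_self_add hu hv).tsum_const_smul, ← hu.tsum_const_smul,
      ← hv.tsum_const_smul, ← (hu.const_smul β).tsum_add (hv.const_smul α),
      ← ((hu.const_smul β).add (hv.const_smul α)).tsum_const_smul]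
    exact (summable_inner_self_add hu hv).const_smul _ |>.tsum_le_tsum
      (fun i => mul_smul_inner_self_add_le α β (u i) (v i))
      (((hu.const_smul β).add (hv.const_smul α)).const_smul _)
  have h0 : 0 ≤ (α * β) • ∑' i, ⟪u i + v i, u i + v i⟫_A :=
    smul_nonneg (by positivity) (tsum_nonneg fun _ => inner_self_nonneg)
  calc α * β * ‖∑' i, ⟪u i + v i, u i + v i⟫_A‖
      = ‖(α * β) • ∑' i, ⟪u i + v i, u i + v i⟫_A‖ := by
        rw [norm_smul, Real.norm_of_nonneg (by positivity)]
    _ ≤ ‖(α + β) • (β • ∑' i, ⟪u i, u i⟫_A + α • ∑' i, ⟪v i, v i⟫_A)‖ :=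
        CStarAlgebra.norm_le_norm_of_nonneg_of_le h0 hle
    _ ≤ (α + β) * (β * ‖∑' i, ⟪u i, u i⟫_A‖ + α * ‖∑' i, ⟪v i, v i⟫_A‖) := by
        rw [norm_smul, Real.norm_of_nonneg (by positivity)]
        gcongr
        exact (norm_add_le _ _).trans_eq <| by
          rw [norm_smul, norm_smul, Real.norm_of_nonneg hα, Real.norm_of_nonneg hβ]

variable (A) in
/-- The norm of `v` in the Hilbert module `ℓ²(ι, H)`; meaningful when `∑ ⟪v i, v i⟫` converges. -/
noncomputable def ell2Norm (v : ι → H) : ℝ := √‖∑' i, ⟪v i, v i⟫_A‖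

omit [StarOrderedRing A] in
lemma ell2Norm_nonneg (v : ι → H) : 0 ≤ ell2Norm A v := Real.sqrt_nonneg _

omit [StarOrderedRing A] in
lemma ell2Norm_sq (v : ι → H) : ell2Norm A v ^ 2 = ‖∑' i, ⟪v i, v i⟫_A‖ :=
  Real.sq_sqrt (norm_nonneg _)

omit [StarOrderedRing A] in
@[simp]
lemma ell2Norm_neg (v : ι → H) : ell2Norm A (fun i => -v i) = ell2Norm A v := by
  simp only [ell2Norm, inner_neg_left, inner_neg_right, neg_neg]

lemma ell2Norm_add_le (hu : Summable fun i => ⟪u i, u i⟫_A)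
    (hv : Summable fun i => ⟪v i, v i⟫_A) :
    ell2Norm A (fun i => u i + v i) ≤ ell2Norm A u + ell2Norm A v :=
  Real.sqrt_le_iff.mpr ⟨add_nonneg (ell2Norm_nonneg u) (ell2Norm_nonneg v),
    Real.le_sqrt_add_sqrt_sq_of_forall (norm_nonneg _) (norm_nonneg _)
      fun _ _ hα hβ => mul_norm_tsum_inner_self_add_le hu hv hα.le hβ.le⟩

lemma ell2Norm_le_of_tsum_le {c : ℝ} (hc : 0 ≤ c) {x : H}
    (h : ∑' i, ⟪v i, v i⟫_A ≤ c • ⟪x, x⟫_A) : ell2Norm A v ≤ √c * ‖x‖ := by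
  rw [← Real.sqrt_sq (norm_nonneg x), ← Real.sqrt_mul hc, ← norm_smul_inner_self (A := A) hc]
  exact Real.sqrt_le_sqrt <|
    CStarAlgebra.norm_le_norm_of_nonneg_of_le (tsum_nonneg fun _ => inner_self_nonneg) h

lemma le_ell2Norm_of_le_tsum {c : ℝ} (hc : 0 ≤ c) {x : H}
    (h : c • ⟪x, x⟫_A ≤ ∑' i, ⟪v i, v i⟫_A) : √c * ‖x‖ ≤ ell2Norm A v := by
  rw [← Real.sqrt_sq (norm_nonneg x), ← Real.sqrt_mul hc, ← norm_smul_inner_self (A := A) hc]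
  exact Real.sqrt_le_sqrt <|
    CStarAlgebra.norm_le_norm_of_nonneg_of_le (smul_nonneg hc inner_self_nonneg) h

end CStarModule

open CStarModule

theorem operatorFrame_perturbation_general
    {A : Type*} [CStarAlgebra A] [PartialOrder A] [StarOrderedRing A]
    {H : Type*} [NormedAddCommGroup H] [NormedSpace ℂ H] [SMul A H] [CStarModule A H]
    {ι : Type*}
    (T R : ι → H →L[ℂ] H)
    (ν δ ξ : ℝ) (hν : 0 < ν) (hδ : 0 < δ) (hξ : 0 < ξ) (hξν : ξ < ν)
    (hTsum : ∀ x : H, Summable fun i => ⟪T i x, T i x⟫_A)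
    (hTframe : ∀ x : H,
      ν • ⟪x, x⟫_A ≤ ∑' i, ⟪T i x, T i x⟫_A ∧
      (∑' i, ⟪T i x, T i x⟫_A) ≤ δ • ⟪x, x⟫_A)
    (hRsum : ∀ x : H, Summable fun i => ⟪R i x, R i x⟫_A)
    (hRBessel : ∀ x : H, (∑' i, ⟪R i x, R i x⟫_A) ≤ ξ • ⟪x, x⟫_A) :
    ∀ x : H,
      (Summable fun i => ⟪(T i + R i) x, (T i + R i) x⟫_A) ∧
      (Real.sqrt ν - Real.sqrt ξ) ^ 2 * ‖x‖ ^ 2 ≤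
        ‖∑' i, ⟪(T i + R i) x, (T i + R i) x⟫_A‖ ∧
      ‖∑' i, ⟪(T i + R i) x, (T i + R i) x⟫_A‖ ≤
        (Real.sqrt δ + Real.sqrt ξ) ^ 2 * ‖x‖ ^ 2 := by
  intro x
  have hsum := summable_inner_self_add (hTsum x) (hRsum x)
  have hR : ell2Norm A (fun i => R i x) ≤ √ξ * ‖x‖ :=
    ell2Norm_le_of_tsum_le hξ.le (hRBessel x)
  have hupper : ell2Norm A (fun i => T i x + R i x) ≤ (√δ + √ξ) * ‖x‖ := by
    have hT := ell2Norm_le_of_tsum_le hδ.le (hTframe x).2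
    linarith [ell2Norm_add_le (hTsum x) (hRsum x)]
  have hlower : (√ν - √ξ) * ‖x‖ ≤ ell2Norm A (fun i => T i x + R i x) := by
    have hT := le_ell2Norm_of_le_tsum hν.le (hTframe x).1
    have hTR := ell2Norm_add_le hsum (v := fun i => -R i x) (by simpa using hRsum x)
    simp only [add_neg_cancel_right, ell2Norm_neg] at hTR
    linarith
  have hgap : 0 ≤ (√ν - √ξ) * ‖x‖ :=
    mul_nonneg (sub_nonneg.mpr (Real.sqrt_le_sqrt hξν.le)) (norm_nonneg x)
  simp only [add_apply, ← ell2Norm_sq, ← mul_pow]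
  exact ⟨hsum, pow_le_pow_left₀ hgap hlower 2, pow_le_pow_left₀ (ell2Norm_nonneg _) hupper 2⟩

/-- Let `{T i}` be an operator frame for `End*_A(H)` with bounds
`ν, δ` and `{R i}` an operator Bessel family with bound `ξ < ν`.  Then `{Tᵢ + Rᵢ}` is an
operator frame with bounds `(√ν − √ξ)²` and `(√δ + √ξ)²` (at the level of norms). -/
theorem operatorFrame_perturbation
    {A : Type*} [CStarAlgebra A] [PartialOrder A] [StarOrderedRing A]
    {H : Type*} [NormedAddCommGroup H] [NormedSpace ℂ H] [SMul A H] [CStarModule A H]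
    {ι : Type*}
    (T R : ι → H →L[ℂ] H) (Tad Rad : ι → H →L[ℂ] H)
    (hTadj : ∀ (i) (x y : H), ⟪T i x, y⟫_A = ⟪x, Tad i y⟫_A)
    (hRadj : ∀ (i) (x y : H), ⟪R i x, y⟫_A = ⟪x, Rad i y⟫_A)
    (ν δ ξ : ℝ) (hν : 0 < ν) (hδ : 0 < δ) (hξ : 0 < ξ) (hξν : ξ < ν)
    (hTsum : ∀ x : H, Summable fun i => ⟪T i x, T i x⟫_A)
    (hTframe : ∀ x : H,
      ν • ⟪x, x⟫_A ≤ ∑' i, ⟪T i x, T i x⟫_A ∧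
      (∑' i, ⟪T i x, T i x⟫_A) ≤ δ • ⟪x, x⟫_A)
    (hRsum : ∀ x : H, Summable fun i => ⟪R i x, R i x⟫_A)
    (hRBessel : ∀ x : H, (∑' i, ⟪R i x, R i x⟫_A) ≤ ξ • ⟪x, x⟫_A) :
    ∀ x : H,
      (Summable fun i => ⟪(T i + R i) x, (T i + R i) x⟫_A) ∧
      (Real.sqrt ν - Real.sqrt ξ) ^ 2 * ‖x‖ ^ 2 ≤
        ‖∑' i, ⟪(T i + R i) x, (T i + R i) x⟫_A‖ ∧
      ‖∑' i, ⟪(T i + R i) x, (T i + R i) x⟫_A‖ ≤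
        (Real.sqrt δ + Real.sqrt ξ) ^ 2 * ‖x‖ ^ 2 :=
  operatorFrame_perturbation_general (A := A) T R ν δ ξ hν hδ hξ hξν hTsum hTframe hRsum hRBessel
end
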